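/- arXiv:1409.2812 — 4 statements merged into one kernel-verified Lean document; each statement's English description precedes it below -/
import Mathlib

section
/- Let $u:[-1,1]\to\mathbb{R}$ be continuous with $-1<u(x)\le 0$ for every $x\in[-1,1]$, and let $\psi:[-1,1]\times\mathbb{R}\to\mathbb{R}$ be such that for each $x\in[-1,1]$ the function $z\mapsto\psi(x,z)$ is differentiable on $[-1,u(x)]$, $\psi(x,-1)=0$, and $\psi(x,u(x))=1$. Then $\int_{-1}^{1}\int_{-1}^{u(x)}\big(\partial_z\psi(x,z)\big)^2\,\mathrm{d}z\,\mathrm{d}x \;\ge\; \int_{-1}^{1}\frac{\mathrm{d}x}{1+u(x)} \;\ge\; 2$, where the integrals are taken in the extended (Lebesgue) sense. -/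
/-!
On each vertical segment `{x} × [-1, u x]`, the function `ψ x` rises by `1` over a length
`1 + u x`, so by the fundamental theorem of calculus and Cauchy–Schwarz (Jensen for `t ↦ t²`)
its Dirichlet energy is at least `1 / (1 + u x)`. Since `1 + u x ≤ 1`, this is at least `1`,
and integrating over `x ∈ (-1, 1)` gives `2`.
-/

open MeasureTheory Set
open scoped ENNReal

theorem sq_integral_le_measureReal_univ_mul_integral_sq {α : Type*} [MeasurableSpace α]
    {μ : Measure α} [IsFiniteMeasure μ] {f : α → ℝ} (hf : Integrable f μ)
    (hf2 : Integrable (fun x => f x ^ 2) μ) :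
    (∫ x, f x ∂μ) ^ 2 ≤ μ.real univ * ∫ x, f x ^ 2 ∂μ := by
  rcases eq_zero_or_neZero μ with rfl | _
  · simp
  have hm := measureReal_univ_pos (μ := μ)
  have jensen : (⨍ x, f x ∂μ) ^ 2 ≤ ⨍ x, f x ^ 2 ∂μ :=
    even_two.convexOn_pow.map_average_le (continuous_pow 2).continuousOn isClosed_univ
      (ae_of_all _ fun x => mem_univ (f x)) hf hf2
  rw [average_eq, average_eq, smul_eq_mul, smul_eq_mul, mul_pow, sq, mul_assoc,
    mul_le_mul_iff_right₀ (inv_pos.2 hm), inv_mul_le_iff₀ hm] at jensen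
  exact jensen

theorem ofReal_sq_sub_div_le_setLIntegral_sq_of_hasDerivAt {f f' : ℝ → ℝ} {a b : ℝ}
    (hab : a ≤ b) (hcont : ContinuousOn f (Icc a b))
    (hderiv : ∀ z ∈ Ioo a b, HasDerivAt f (f' z) z) :
    ENNReal.ofReal ((f b - f a) ^ 2 / (b - a)) ≤ ∫⁻ z in Ioo a b, ENNReal.ofReal (f' z ^ 2) := by
  set μ := volume.restrict (Ioo a b)
  have hmeas : AEStronglyMeasurable f' μ :=
    (measurable_deriv f).aestronglyMeasurable.congr <|
      (ae_restrict_iff' measurableSet_Ioo).2 (ae_of_all _ fun z hz => (hderiv z hz).deriv)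
  by_cases hfin : ∫⁻ z, ENNReal.ofReal (f' z ^ 2) ∂μ = ∞
  · simp [μ, hfin]
  have hf2 : Integrable (fun z => f' z ^ 2) μ :=
    ⟨hmeas.pow 2, (hasFiniteIntegral_iff_ofReal (ae_of_all _ fun z => sq_nonneg _)).2
      (lt_top_iff_ne_top.2 hfin)⟩
  have hf : Integrable f' μ := ((memLp_two_iff_integrable_sq hmeas).2 hf2).integrable one_le_two
  have ftc : ∫ z, f' z ∂μ = f b - f a := by
    rw [← integral_Ioc_eq_integral_Ioo, ← intervalIntegral.integral_of_le hab]
    exact intervalIntegral.integral_eq_sub_of_hasDerivAt_of_le hab hcont hderiv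
      ((intervalIntegrable_iff_integrableOn_Ioo_of_le hab).2 hf)
  have cs := sq_integral_le_measureReal_univ_mul_integral_sq hf hf2
  rw [ftc, measureReal_restrict_apply_univ, Real.volume_real_Ioo_of_le hab] at cs
  rw [← ofReal_integral_eq_lintegral_ofReal hf2 (ae_of_all _ fun z => sq_nonneg _)]
  exact ENNReal.ofReal_le_ofReal <| div_le_of_le_mul₀ (sub_nonneg.2 hab)
    (integral_nonneg fun z => sq_nonneg _) (cs.trans_eq (mul_comm _ _))

theorem stmt_0_general (u : ℝ → ℝ) (ψ ψz : ℝ → ℝ → ℝ)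
    (hu : ∀ x ∈ Set.Icc (-1:ℝ) 1, -1 < u x ∧ u x ≤ 0)
    (hψ : ∀ x ∈ Set.Icc (-1:ℝ) 1, ∀ z ∈ Set.Icc (-1:ℝ) (u x), HasDerivAt (ψ x) (ψz x z) z)
    (hψ0 : ∀ x ∈ Set.Icc (-1:ℝ) 1, ψ x (-1) = 0)
    (hψ1 : ∀ x ∈ Set.Icc (-1:ℝ) 1, ψ x (u x) = 1) :
    (∫⁻ x in Set.Ioo (-1:ℝ) 1, ENNReal.ofReal (1 / (1 + u x))) ≤
      (∫⁻ x in Set.Ioo (-1:ℝ) 1, ∫⁻ z in Set.Ioo (-1:ℝ) (u x),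
        ENNReal.ofReal ((ψz x z) ^ 2)) ∧
    (2 : ℝ≥0∞) ≤ ∫⁻ x in Set.Ioo (-1:ℝ) 1, ENNReal.ofReal (1 / (1 + u x)) := by
  refine ⟨setLIntegral_mono' measurableSet_Ioo fun x hx => ?_, ?_⟩
  · have hx' := Ioo_subset_Icc_self hx
    have hcont : ContinuousOn (ψ x) (Icc (-1) (u x)) := fun z hz =>
      (hψ x hx' z hz).continuousAt.continuousWithinAt
    have energy := ofReal_sq_sub_div_le_setLIntegral_sq_of_hasDerivAt (hu x hx').1.le hcont
      fun z hz => hψ x hx' z (Ioo_subset_Icc_self hz)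
    rwa [hψ0 x hx', hψ1 x hx', sub_zero, one_pow, sub_neg_eq_add, add_comm] at energy
  · calc (2 : ℝ≥0∞) = ∫⁻ _ in Ioo (-1:ℝ) 1, 1 := by norm_num [Real.volume_Ioo]
      _ ≤ _ := setLIntegral_mono' measurableSet_Ioo fun x hx => by
        obtain ⟨hlow, hup⟩ := hu x (Ioo_subset_Icc_self hx)
        rw [← ENNReal.ofReal_one]
        exact ENNReal.ofReal_le_ofReal <| one_le_one_div (by linarith) (by linarith)

/-- Lower bound on the vertical Dirichlet energy (Lemma 2.7, lower bound, classical form):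
if `-1 < u ≤ 0` and `ψ(x,·)` is differentiable on `[-1, u x]` with `ψ(x,-1) = 0` and
`ψ(x,u x) = 1`, then
`∫∫ (∂_z ψ)² ≥ ∫ dx/(1+u) ≥ 2`, the integrals being extended Lebesgue integrals. -/
theorem stmt_0 (u : ℝ → ℝ) (ψ ψz : ℝ → ℝ → ℝ)
    (hu_cont : ContinuousOn u (Set.Icc (-1) 1))
    (hu : ∀ x ∈ Set.Icc (-1:ℝ) 1, -1 < u x ∧ u x ≤ 0)
    (hψ : ∀ x ∈ Set.Icc (-1:ℝ) 1, ∀ z ∈ Set.Icc (-1:ℝ) (u x), HasDerivAt (ψ x) (ψz x z) z)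
    (hψ0 : ∀ x ∈ Set.Icc (-1:ℝ) 1, ψ x (-1) = 0)
    (hψ1 : ∀ x ∈ Set.Icc (-1:ℝ) 1, ψ x (u x) = 1) :
    (∫⁻ x in Set.Ioo (-1:ℝ) 1, ENNReal.ofReal (1 / (1 + u x))) ≤
      (∫⁻ x in Set.Ioo (-1:ℝ) 1, ∫⁻ z in Set.Ioo (-1:ℝ) (u x),
        ENNReal.ofReal ((ψz x z) ^ 2)) ∧
    (2 : ℝ≥0∞) ≤ ∫⁻ x in Set.Ioo (-1:ℝ) 1, ENNReal.ofReal (1 / (1 + u x)) :=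
  stmt_0_general u ψ ψz hu hψ hψ0 hψ1
end

section
/- Let $\rho>2$ and $K\ge 2/\rho$. Let $v:[-1,1]\to\mathbb{R}$ be twice continuously differentiable and even, with $-1<v(x)\le 0$ for all $x\in[-1,1]$, $v(-1)=v(1)=0$, $\big(\int_{-1}^{1}|v''(x)|^2\,\mathrm{d}x\big)^{1/2}\le K$, and $\int_{-1}^{1}\frac{\mathrm{d}x}{1+v(x)}\le\rho$. Then $\min_{x\in[-1,1]} v(x) \;\ge\; \frac{1}{\rho^3 K^2}-1$. -/
/-!
Let `a ≤ 0` be a minimum point of `v` (it exists by evenness) and `ε = 1 + v a`. At an interior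
minimum `v' a = 0`, so Cauchy–Schwarz against `‖v''‖₂ ≤ K` gives `v' t ≤ K √(t - a)`, and hence
`1 + v y ≤ ε + (2/3) K (y - a)^{3/2}`. At the scale `r` with `K r³ = ε`, the integral of
`1 / (1 + v)` over `[a, a + 4r²]` is at least `r² / ε`, so `r² ≤ ρ ε`; cubing,
`ε² / K² = r⁶ ≤ ρ³ ε³`. The condition `K ≥ 2/ρ` covers the case where `a + 4r²` leaves `[-1, 1]`.
-/

open Set intervalIntegral
open MeasureTheory (volume ae_restrict_of_forall_mem)

theorem integral_mono_interval_of_nonneg {f : ℝ → ℝ} {a b c d : ℝ} (hca : c ≤ a) (hab : a ≤ b)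
    (hbd : b ≤ d) (hf : ContinuousOn f (Icc c d)) (hnn : ∀ x ∈ Icc c d, 0 ≤ f x) :
    ∫ x in a..b, f x ≤ ∫ x in c..d, f x :=
  integral_mono_interval hca hab hbd
    (ae_restrict_of_forall_mem measurableSet_Ioc fun x hx =>
      hnn x (Ioc_subset_Icc_self hx))
    (hf.mono (uIcc_of_le (hca.trans (hab.trans hbd))).subset).intervalIntegrable

theorem mul_sub_le_integral_of_le {f : ℝ → ℝ} {a b m : ℝ} (hab : a ≤ b)
    (hf : IntervalIntegrable f volume a b) (hm : ∀ x ∈ Icc a b, m ≤ f x) :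
    (b - a) * m ≤ ∫ x in a..b, f x := by
  simpa [mul_comm] using integral_mono_on hab intervalIntegrable_const hf hm

theorem sq_integral_le_mul_integral_sq {g : ℝ → ℝ} {a b : ℝ} (hab : a ≤ b)
    (hg : ContinuousOn g (Icc a b)) :
    (∫ x in a..b, g x) ^ 2 ≤ (b - a) * ∫ x in a..b, g x ^ 2 := by
  have hg₁ : IntervalIntegrable g volume a b :=
    (hg.mono (uIcc_of_le hab).subset).intervalIntegrable
  have hg₂ : IntervalIntegrable (fun x => g x ^ 2) volume a b :=
    ((hg.pow 2).mono (uIcc_of_le hab).subset).intervalIntegrable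
  have hquad : ∀ t, 0 ≤ (b - a) * (t * t) + (-2 * ∫ x in a..b, g x) * t
      + ∫ x in a..b, g x ^ 2 := by
    intro t
    have hexpand : ∫ x in a..b, (g x - t) ^ 2 = (b - a) * (t * t)
        + (-2 * ∫ x in a..b, g x) * t + ∫ x in a..b, g x ^ 2 := by
      have : (fun x => (g x - t) ^ 2) = fun x => g x ^ 2 - 2 * t * g x + t * t := by
        ext x; ring
      rw [this, integral_add (hg₂.sub (hg₁.const_mul _)) intervalIntegrable_const,
        integral_sub hg₂ (hg₁.const_mul _), integral_const_mul, integral_const, smul_eq_mul]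
      ring
    exact hexpand ▸ integral_nonneg hab fun _ _ => sq_nonneg _
  have := discrim_le_zero hquad
  rw [discrim] at this
  linarith

theorem le_mul_sqrt_sub_of_integral_sq_le {g g' : ℝ → ℝ} {a b K : ℝ} (hK : 0 ≤ K)
    (hg : ∀ x ∈ Icc a b, HasDerivAt g (g' x) x) (hg' : ContinuousOn g' (Icc a b))
    (ha : g a ≤ 0) (hL2 : ∫ x in a..b, g' x ^ 2 ≤ K ^ 2) :
    ∀ t ∈ Icc a b, g t ≤ K * √(t - a) := by
  intro t ht
  have hsub : Icc a t ⊆ Icc a b := Icc_subset_Icc_right ht.2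
  have hftc : ∫ x in a..t, g' x = g t - g a :=
    integral_eq_sub_of_hasDerivAt (fun x hx => hg x (hsub (uIcc_of_le ht.1 ▸ hx)))
      ((hg'.mono (uIcc_of_le ht.1 ▸ hsub)).intervalIntegrable)
  have hL2t : ∫ x in a..t, g' x ^ 2 ≤ K ^ 2 :=
    (integral_mono_interval_of_nonneg le_rfl ht.1 ht.2 (hg'.pow 2)
      fun _ _ => sq_nonneg _).trans hL2
  calc g t ≤ ∫ x in a..t, g' x := by linarith
    _ ≤ √((t - a) * ∫ x in a..t, g' x ^ 2) :=
      Real.le_sqrt_of_sq_le (sq_integral_le_mul_integral_sq ht.1 (hg'.mono hsub))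
    _ ≤ √((t - a) * K ^ 2) :=
      Real.sqrt_le_sqrt (mul_le_mul_of_nonneg_left hL2t (sub_nonneg.2 ht.1))
    _ = K * √(t - a) := by rw [Real.sqrt_mul' _ (sq_nonneg K), Real.sqrt_sq hK, mul_comm]

theorem le_add_mul_sqrt_sub_pow_three {f f' : ℝ → ℝ} {a b K : ℝ}
    (hf : ∀ x ∈ Icc a b, HasDerivAt f (f' x) x) (hf' : ∀ x ∈ Icc a b, f' x ≤ K * √(x - a)) :
    ∀ y ∈ Icc a b, f y ≤ f a + 2 / 3 * K * √(y - a) ^ 3 := by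
  have hmono : MonotoneOn (fun x => 2 / 3 * K * √(x - a) ^ 3 - f x) (Icc a b) := by
    refine monotoneOn_of_hasDerivWithinAt_nonneg (f' := fun x => K * √(x - a) - f' x)
      (convex_Icc a b) ?_ (fun x hx => ?_) (fun x hx => ?_)
    · exact ContinuousOn.sub (by fun_prop) fun x hx => (hf x hx).continuousAt.continuousWithinAt
    · rw [interior_Icc] at hx ⊢
      have hpos : 0 < √(x - a) := Real.sqrt_pos.2 (sub_pos.2 hx.1)
      refine ((((((hasDerivAt_id' x).sub_const a).sqrt (sub_pos.2 hx.1).ne').pow 3).const_mul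
        (2 / 3 * K)).sub (hf x (Ioo_subset_Icc_self hx))).hasDerivWithinAt.congr_deriv ?_
      field_simp
      ring_nf
    · rw [interior_Icc] at hx
      exact sub_nonneg.2 (hf' x (Ioo_subset_Icc_self hx))
  intro y hy
  have := hmono (left_mem_Icc.2 (hy.1.trans hy.2)) hy hy.1
  simp only [sub_self, Real.sqrt_zero] at this
  linarith

theorem div_le_integral_inv_of_le_mul {u : ℝ → ℝ} {a r ε : ℝ} (hr : 0 < r) (hε : 0 < ε)
    (hu : ContinuousOn u (Icc a (a + 4 * r ^ 2)))
    (hpos : ∀ y ∈ Icc a (a + 4 * r ^ 2), 0 < u y)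
    (hle : ∀ y ∈ Icc a (a + 4 * r ^ 2), u y ≤ ε * (1 + 2 / 3 * (√(y - a) / r) ^ 3)) :
    r ^ 2 / ε ≤ ∫ y in a..a + 4 * r ^ 2, (u y)⁻¹ := by
  set b := a + 4 * r ^ 2 with hb
  have hint : ∀ p ∈ Icc a b, ∀ q ∈ Icc a b, IntervalIntegrable (fun y => (u y)⁻¹) volume p q :=
    fun p hp q hq =>
      ((hu.inv₀ fun y hy => (hpos y hy).ne').mono (uIcc_subset_Icc hp hq)).intervalIntegrable
  have hstep : ∀ c p q, 0 ≤ c → a ≤ p → p ≤ q → q ≤ a + c ^ 2 * r ^ 2 → q ≤ b →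
      (q - p) * (ε * (1 + 2 / 3 * c ^ 3))⁻¹ ≤ ∫ y in p..q, (u y)⁻¹ := by
    intro c p q hc hap hpq hqc hqb
    refine mul_sub_le_integral_of_le hpq
      (hint p ⟨hap, hpq.trans hqb⟩ q ⟨hap.trans hpq, hqb⟩) fun y hy => ?_
    have hsqrt : √(y - a) / r ≤ c := by
      rw [div_le_iff₀ hr, Real.sqrt_le_left (by positivity)]
      linarith [hy.2]
    have hsqrt₀ : 0 ≤ √(y - a) / r := by positivity
    have hy' : y ∈ Icc a b := ⟨hap.trans hy.1, hy.2.trans hqb⟩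
    exact inv_anti₀ (hpos y hy') ((hle y hy').trans (by gcongr))
  have hr2 : 0 < r ^ 2 := by positivity
  have ha : a ∈ Icc a b := ⟨le_rfl, by linarith⟩
  have hp₁ : a + r ^ 2 ∈ Icc a b := ⟨by linarith, by linarith⟩
  have hp₂ : a + 9 / 4 * r ^ 2 ∈ Icc a b := ⟨by linarith, by linarith⟩
  have h₁ := hstep 1 a (a + r ^ 2) zero_le_one le_rfl hp₁.1 (by linarith) hp₁.2
  have h₂ := hstep (3 / 2) (a + r ^ 2) (a + 9 / 4 * r ^ 2) (by norm_num) hp₁.1 (by linarith)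
    (by linarith) hp₂.2
  have h₃ := hstep 2 (a + 9 / 4 * r ^ 2) b zero_le_two hp₂.1 hp₂.2 (by linarith) le_rfl
  have hsplit₁ := integral_add_adjacent_intervals (hint a ha _ hp₁) (hint _ hp₁ _ hp₂)
  have hsplit₂ := integral_add_adjacent_intervals (hint a ha _ hp₂)
    (hint _ hp₂ b ⟨by linarith, le_rfl⟩)
  -- substituting `y = a + r² t²`, this is a lower Riemann sum at `t = 1, 3/2, 2` of
  -- `(r² / ε) ∫₀² 2t dt / (1 + 2t³/3)`
  calc r ^ 2 / ε ≤ 3 / 5 * (r ^ 2 / ε) + 5 / 13 * (r ^ 2 / ε) + 21 / 76 * (r ^ 2 / ε) := by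
        linarith [div_pos hr2 hε]
    _ = (a + r ^ 2 - a) * (ε * (1 + 2 / 3 * 1 ^ 3))⁻¹
        + (a + 9 / 4 * r ^ 2 - (a + r ^ 2)) * (ε * (1 + 2 / 3 * (3 / 2) ^ 3))⁻¹
        + (b - (a + 9 / 4 * r ^ 2)) * (ε * (1 + 2 / 3 * 2 ^ 3))⁻¹ := by
        rw [hb]; field_simp; ring
    _ ≤ ∫ y in a..b, (u y)⁻¹ := by linarith

theorem sq_div_le_integral_inv {u u' u'' : ℝ → ℝ} {a K r : ℝ} (hK : 0 < K) (hr : 0 < r)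
    (hu' : ∀ x ∈ Icc a (a + 4 * r ^ 2), HasDerivAt u (u' x) x)
    (hu'' : ∀ x ∈ Icc a (a + 4 * r ^ 2), HasDerivAt u' (u'' x) x)
    (hu''c : ContinuousOn u'' (Icc a (a + 4 * r ^ 2)))
    (hpos : ∀ x ∈ Icc a (a + 4 * r ^ 2), 0 < u x) (ha : u' a ≤ 0)
    (hL2 : ∫ x in a..a + 4 * r ^ 2, u'' x ^ 2 ≤ K ^ 2) (hKr : K * r ^ 3 = u a) :
    r ^ 2 / u a ≤ ∫ x in a..a + 4 * r ^ 2, (u x)⁻¹ := by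
  have hu'le := le_mul_sqrt_sub_of_integral_sq_le hK.le hu'' hu''c ha hL2
  refine div_le_integral_inv_of_le_mul hr (hKr ▸ by positivity)
    (fun x hx => (hu' x hx).continuousAt.continuousWithinAt) hpos fun y hy => ?_
  have hscale : K * √(y - a) ^ 3 = u a * (√(y - a) / r) ^ 3 := by
    rw [← hKr, div_pow]; field_simp
  linarith [le_add_mul_sqrt_sub_pow_three hu' hu'le y hy]

theorem exists_isMinOn_nonpos_of_even {v : ℝ → ℝ} {b : ℝ} (hb : 0 ≤ b)
    (hc : ContinuousOn v (Icc (-b) b)) (heven : ∀ x ∈ Icc (-b) b, v (-x) = v x) :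
    ∃ a ∈ Icc (-b) b, a ≤ 0 ∧ IsMinOn v (Icc (-b) b) a := by
  obtain ⟨x₀, hx₀, hmin⟩ := isCompact_Icc.exists_isMinOn (nonempty_Icc.2 (by linarith)) hc
  rcases le_total x₀ 0 with h | h
  · exact ⟨x₀, hx₀, h, hmin⟩
  · refine ⟨-x₀, ⟨neg_le_neg hx₀.2, by linarith [hx₀.1]⟩, neg_nonpos.2 h, ?_⟩
    exact isMinOn_iff.2 fun y hy => heven x₀ hx₀ ▸ isMinOn_iff.1 hmin y hy

theorem sq_le_mul_of_isMinOn {u u' u'' : ℝ → ℝ} {c d a K r ρ : ℝ} (hK : 0 < K) (hr : 0 < r)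
    (hu' : ∀ x ∈ Icc c d, HasDerivAt u (u' x) x)
    (hu'' : ∀ x ∈ Icc c d, HasDerivAt u' (u'' x) x) (hu''c : ContinuousOn u'' (Icc c d))
    (hpos : ∀ x ∈ Icc c d, 0 < u x) (hL2 : ∫ x in c..d, u'' x ^ 2 ≤ K ^ 2)
    (hρ : ∫ x in c..d, (u x)⁻¹ ≤ ρ) (hmin : IsMinOn u (Icc c d) a) (hca : c < a)
    (hb : a + 4 * r ^ 2 ≤ d) (hKr : K * r ^ 3 = u a) :
    r ^ 2 ≤ ρ * u a := by
  have har : a < a + 4 * r ^ 2 := lt_add_of_pos_right a (by positivity)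
  have hsub : Icc a (a + 4 * r ^ 2) ⊆ Icc c d := Icc_subset_Icc hca.le hb
  have ha : a ∈ Icc c d := ⟨hca.le, har.le.trans hb⟩
  have hu'a : u' a = 0 :=
    (hmin.isLocalMin (Icc_mem_nhds hca (har.trans_le hb))).hasDerivAt_eq_zero (hu' a ha)
  have hL2a : ∫ x in a..a + 4 * r ^ 2, u'' x ^ 2 ≤ K ^ 2 :=
    (integral_mono_interval_of_nonneg hca.le har.le hb (hu''c.pow 2)
      fun _ _ => sq_nonneg _).trans hL2
  have hkey := sq_div_le_integral_inv hK hr (fun x hx => hu' x (hsub hx))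
    (fun x hx => hu'' x (hsub hx)) (hu''c.mono hsub) (fun x hx => hpos x (hsub hx)) hu'a.le
    hL2a hKr
  have huc : ContinuousOn u (Icc c d) := fun x hx => (hu' x hx).continuousAt.continuousWithinAt
  have hint := integral_mono_interval_of_nonneg hca.le har.le hb
    (huc.inv₀ fun x hx => (hpos x hx).ne') fun x hx => (inv_pos.2 (hpos x hx)).le
  rw [← div_le_iff₀ (hpos a ha)]
  exact hkey.trans (hint.trans hρ)

theorem one_le_pow_three_mul_sq_mul {ρ K ε r : ℝ} (hε : 0 < ε) (hKr : K * r ^ 3 = ε)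
    (hr : r ^ 2 ≤ ρ * ε) : 1 ≤ ρ ^ 3 * K ^ 2 * ε := by
  refine le_of_mul_le_mul_left ?_ (pow_pos hε 2)
  calc ε ^ 2 * 1 = K ^ 2 * (r ^ 2) ^ 3 := by rw [← hKr]; ring
    _ ≤ K ^ 2 * (ρ * ε) ^ 3 := by gcongr
    _ = ε ^ 2 * (ρ ^ 3 * K ^ 2 * ε) := by ring

/-- Pointwise lower bound for admissible deflections (Lemma 3.3, classical form):
if `ρ > 2`, `K ≥ 2/ρ`, `v` is `C²`, even, clamped at `±1`, with `-1 < v ≤ 0`,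
`‖v''‖_{L²} ≤ K` and `∫ dx/(1+v) ≤ ρ`, then `min v ≥ 1/(ρ³K²) - 1`. -/
theorem stmt_3 (ρ K : ℝ) (hρ : 2 < ρ) (hK : 2 / ρ ≤ K) (v v' v'' : ℝ → ℝ)
    (hv' : ∀ x ∈ Set.Icc (-1:ℝ) 1, HasDerivAt v (v' x) x)
    (hv'' : ∀ x ∈ Set.Icc (-1:ℝ) 1, HasDerivAt v' (v'' x) x)
    (hv''c : ContinuousOn v'' (Set.Icc (-1) 1))
    (heven : ∀ x ∈ Set.Icc (-1:ℝ) 1, v (-x) = v x)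
    (hv : ∀ x ∈ Set.Icc (-1:ℝ) 1, -1 < v x ∧ v x ≤ 0)
    (hvb : v (-1) = 0 ∧ v 1 = 0)
    (hK2 : Real.sqrt (∫ x in (-1:ℝ)..1, |v'' x| ^ 2) ≤ K)
    (hρ2 : (∫ x in (-1:ℝ)..1, 1 / (1 + v x)) ≤ ρ) :
    ∀ x ∈ Set.Icc (-1:ℝ) 1, 1 / (ρ ^ 3 * K ^ 2) - 1 ≤ v x := by
  have hρ0 : 0 < ρ := by linarith
  have hρK : 2 ≤ ρ * K := by rwa [div_le_iff₀ hρ0, mul_comm] at hK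
  have hK0 : 0 < K := pos_of_mul_pos_right (by linarith) hρ0.le
  have hpos : ∀ x ∈ Icc (-1 : ℝ) 1, 0 < 1 + v x := fun x hx => by linarith [(hv x hx).1]
  obtain ⟨a, ha, ha0, hmin⟩ := exists_isMinOn_nonpos_of_even (v := fun x => 1 + v x) zero_le_one
    (fun x hx => ((hv' x hx).const_add 1).continuousAt.continuousWithinAt)
    fun x hx => congrArg (1 + ·) (heven x hx)
  suffices hmain : 1 ≤ ρ ^ 3 * K ^ 2 * (1 + v a) by
    intro x hx
    have : 1 / (ρ ^ 3 * K ^ 2) ≤ 1 + v a := by rw [div_le_iff₀ (by positivity)]; linarith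
    linarith [isMinOn_iff.1 hmin x hx]
  rcases ha.1.eq_or_lt with rfl | ha1
  · rw [hvb.1]
    nlinarith [pow_le_pow_left₀ zero_le_two hρK 2]
  obtain ⟨r, hr, hKr⟩ : ∃ r, 0 < r ∧ K * r ^ 3 = 1 + v a := by
    have hq : 0 < (1 + v a) / K := div_pos (hpos a ha) hK0
    refine ⟨_, Real.rpow_pos_of_pos hq ((3 : ℕ) : ℝ)⁻¹, ?_⟩
    rw [Real.rpow_inv_natCast_pow hq.le three_ne_zero]
    field_simp
  rcases lt_or_ge (1 / 2) r with hr2 | hr2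
  · calc (1 : ℝ) = 2 ^ 3 * (1 / 2) ^ 3 := by norm_num
      _ ≤ (ρ * K) ^ 3 * r ^ 3 := by gcongr
      _ = ρ ^ 3 * K ^ 2 * (1 + v a) := by rw [← hKr]; ring
  have hb : a + 4 * r ^ 2 ≤ 1 := by nlinarith
  simp only [sq_abs, one_div] at hK2 hρ2
  exact one_le_pow_three_mul_sq_mul (hpos a ha) hKr
    (sq_le_mul_of_isMinOn (u := fun x => 1 + v x) hK0 hr (fun x hx => (hv' x hx).const_add 1)
      hv'' hv''c hpos ((Real.sqrt_le_left hK0.le).1 hK2) hρ2 hmin ha1 hb hKr)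
end

section
/- Let $\beta>0$ and $\tau\ge 0$. There exist a number $\mu_1>0$ and a function $\varphi_1:[-1,1]\to\mathbb{R}$ of class $C^\infty$ such that: (i) $\varphi_1(-x)=\varphi_1(x)$ for all $x\in[-1,1]$; (ii) $\varphi_1(\pm 1)=0$ and $\varphi_1'(\pm 1)=0$; (iii) $\varphi_1(x)<0$ for all $x\in(-1,1)$; (iv) $\min_{x\in[-1,1]}\varphi_1(x)=-1$; and (v) $\beta\,\varphi_1^{(4)}(x)-\tau\,\varphi_1''(x)=\mu_1\,\varphi_1(x)$ for every $x\in(-1,1)$. -/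
open Real Set

noncomputable def FF (a b p q r s : ℝ) : ℝ → ℝ :=
  fun x => p * Real.cosh (b*x) + q * Real.sinh (b*x) + r * Real.cos (a*x) + s * Real.sin (a*x)

lemma hasDerivAt_FF (a b p q r s x : ℝ) :
    HasDerivAt (FF a b p q r s) (FF a b (b*q) (b*p) (a*s) (-(a*r)) x) x := by
  have hb : HasDerivAt (fun y : ℝ => b*y) b x := by simpa using (hasDerivAt_id x).const_mul b
  have ha : HasDerivAt (fun y : ℝ => a*y) a x := by simpa using (hasDerivAt_id x).const_mul a
  have h1 := (Real.hasDerivAt_cosh (b*x)).comp x hb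
  have h2 := (Real.hasDerivAt_sinh (b*x)).comp x hb
  have h3 := (Real.hasDerivAt_cos (a*x)).comp x ha
  have h4 := (Real.hasDerivAt_sin (a*x)).comp x ha
  have h := (((h1.const_mul p).add (h2.const_mul q)).add (h3.const_mul r)).add (h4.const_mul s)
  refine h.congr_deriv ?_
  simp [FF]; ring

lemma deriv_FF (a b p q r s : ℝ) :
    deriv (FF a b p q r s) = FF a b (b*q) (b*p) (a*s) (-(a*r)) :=
  funext fun x => (hasDerivAt_FF a b p q r s x).deriv

lemma contDiff_FF (a b p q r s : ℝ) : ContDiff ℝ (⊤ : ℕ∞) (FF a b p q r s) := by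
  unfold FF
  exact (((contDiff_const.mul (Real.contDiff_cosh.comp (contDiff_const.mul contDiff_id))).add
    (contDiff_const.mul (Real.contDiff_sinh.comp (contDiff_const.mul contDiff_id)))).add
    (contDiff_const.mul (Real.contDiff_cos.comp (contDiff_const.mul contDiff_id)))).add
    (contDiff_const.mul (Real.contDiff_sin.comp (contDiff_const.mul contDiff_id)))

noncomputable def rr (a b : ℝ) : ℝ → ℝ :=
  fun x => a * Real.sin (a*x) * Real.cosh (b*x) + b * Real.cos (a*x) * Real.sinh (b*x)

lemma hasDerivAt_rr (a b x : ℝ) :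
    HasDerivAt (rr a b) ((a^2 + b^2) * (Real.cos (a*x) * Real.cosh (b*x))) x := by
  have hb : HasDerivAt (fun y : ℝ => b*y) b x := by simpa using (hasDerivAt_id x).const_mul b
  have ha : HasDerivAt (fun y : ℝ => a*y) a x := by simpa using (hasDerivAt_id x).const_mul a
  have h1 := (Real.hasDerivAt_cosh (b*x)).comp x hb
  have h2 := (Real.hasDerivAt_sinh (b*x)).comp x hb
  have h3 := (Real.hasDerivAt_cos (a*x)).comp x ha
  have h4 := (Real.hasDerivAt_sin (a*x)).comp x ha
  have h := (((h4.mul h1).const_mul a).add ((h3.mul h2).const_mul b))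
  simp only [Function.comp_def] at h
  have hfun : rr a b = fun y => a * (Real.sin (a*y) * Real.cosh (b*y)) + b * (Real.cos (a*y) * Real.sinh (b*y)) := by
    funext y; unfold rr; ring
  rw [hfun]
  refine h.congr_deriv ?_
  ring

noncomputable def qq (a b : ℝ) : ℝ → ℝ := fun x => Real.cos (a*x) / Real.cosh (b*x)

lemma hasDerivAt_qq (a b x : ℝ) :
    HasDerivAt (qq a b) (-(rr a b x) / (Real.cosh (b*x))^2) x := by
  have hb : HasDerivAt (fun y : ℝ => b*y) b x := by simpa using (hasDerivAt_id x).const_mul b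
  have ha : HasDerivAt (fun y : ℝ => a*y) a x := by simpa using (hasDerivAt_id x).const_mul a
  have h1 := (Real.hasDerivAt_cosh (b*x)).comp x hb
  have h3 := (Real.hasDerivAt_cos (a*x)).comp x ha
  have h := h3.div h1 (Real.cosh_pos (b*x)).ne'
  simp only [Function.comp_def] at h
  refine h.congr_deriv ?_
  unfold rr; ring

lemma rr_cont (a b : ℝ) : Continuous (rr a b) :=
  continuous_iff_continuousAt.2 fun x => (hasDerivAt_rr a b x).continuousAt

lemma rr_zero (a b : ℝ) : rr a b 0 = 0 := by unfold rr; simp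

lemma rr_pos (a b : ℝ) (ha1 : π/2 < a) (ha2 : a < π) (hr1 : rr a b 1 = 0) :
    ∀ x ∈ Ioo (0:ℝ) 1, 0 < rr a b x := by
  have hπ := Real.pi_pos
  have ha0 : 0 < a := by linarith
  set m : ℝ := π/(2*a) with hm
  have ham : a * m = π/2 := by rw [hm]; field_simp
  have hm0 : 0 < m := by positivity
  have hm1 : m < 1 := by
    rw [hm, div_lt_one (by linarith)]; linarith
  have hpos : 0 < a^2 + b^2 := add_pos_of_pos_of_nonneg (pow_pos ha0 2) (sq_nonneg b)
  have hmono : StrictMonoOn (rr a b) (Icc 0 m) := by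
    apply strictMonoOn_of_deriv_pos (convex_Icc 0 m) ((rr_cont a b).continuousOn)
    intro x hx
    rw [interior_Icc] at hx
    rw [(hasDerivAt_rr a b x).deriv]
    have hcos : 0 < Real.cos (a*x) := by
      apply Real.cos_pos_of_mem_Ioo
      constructor
      · nlinarith [hx.1]
      · calc a * x < a * m := by nlinarith [hx.2]
          _ = π/2 := ham
    have hcosh := Real.cosh_pos (b*x)
    positivity
  have hanti : StrictAntiOn (rr a b) (Icc m 1) := by
    apply strictAntiOn_of_deriv_neg (convex_Icc m 1) ((rr_cont a b).continuousOn)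
    intro x hx
    rw [interior_Icc] at hx
    rw [(hasDerivAt_rr a b x).deriv]
    have hcos : Real.cos (a*x) < 0 := by
      apply Real.cos_neg_of_pi_div_two_lt_of_lt
      · rw [← ham]; nlinarith [hx.1]
      · nlinarith [hx.2]
    exact mul_neg_of_pos_of_neg hpos (mul_neg_of_neg_of_pos hcos (Real.cosh_pos (b*x)))
  intro x hx
  rcases le_or_gt x m with h | h
  · have := hmono (left_mem_Icc.2 hm0.le) ⟨hx.1.le, h⟩ hx.1
    rwa [rr_zero] at this
  · have := hanti ⟨h.le, hx.2.le⟩ (right_mem_Icc.2 hm1.le) hx.2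
    rwa [hr1] at this

lemma qq_anti (a b : ℝ) (ha1 : π/2 < a) (ha2 : a < π) (hr1 : rr a b 1 = 0) :
    StrictAntiOn (qq a b) (Icc 0 1) := by
  have hcont : Continuous (qq a b) :=
    continuous_iff_continuousAt.2 fun x => (hasDerivAt_qq a b x).continuousAt
  apply strictAntiOn_of_deriv_neg (convex_Icc 0 1) hcont.continuousOn
  intro x hx
  rw [interior_Icc] at hx
  rw [(hasDerivAt_qq a b x).deriv]
  have h1 := rr_pos a b ha1 ha2 hr1 x hx
  have h2 := Real.cosh_pos (b*x)
  apply div_neg_of_neg_of_pos (by linarith) (by positivity)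

/-- Lemma 2.8(i): the clamped operator `β∂ₓ⁴ - τ∂ₓ²` on `(-1,1)` has a positive
eigenvalue `μ₁` with a smooth, even eigenfunction `φ₁` which is negative on `(-1,1)`,
vanishes together with its derivative at `±1`, and has minimum `-1`. -/
theorem stmt_6 (β τ : ℝ) (hβ : 0 < β) (hτ : 0 ≤ τ) :
    ∃ (μ₁ : ℝ) (φ₁ : ℝ → ℝ), 0 < μ₁ ∧ ContDiff ℝ (⊤ : ℕ∞) φ₁ ∧
      (∀ x ∈ Set.Icc (-1:ℝ) 1, φ₁ (-x) = φ₁ x) ∧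
      φ₁ (-1) = 0 ∧ φ₁ 1 = 0 ∧ deriv φ₁ (-1) = 0 ∧ deriv φ₁ 1 = 0 ∧
      (∀ x ∈ Set.Ioo (-1:ℝ) 1, φ₁ x < 0) ∧
      (∀ x ∈ Set.Icc (-1:ℝ) 1, -1 ≤ φ₁ x) ∧ (∃ x ∈ Set.Icc (-1:ℝ) 1, φ₁ x = -1) ∧
      ∀ x ∈ Set.Ioo (-1:ℝ) 1,
        β * iteratedDeriv 4 φ₁ x - τ * iteratedDeriv 2 φ₁ x = μ₁ * φ₁ x := by
  have hπ := Real.pi_pos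
  set c : ℝ := τ/β with hc
  have hc0 : 0 ≤ c := div_nonneg hτ hβ.le
  -- find the frequency a by the intermediate value theorem
  set g : ℝ → ℝ := fun a => a * Real.sin a * Real.cosh (Real.sqrt (a^2+c)) +
      Real.sqrt (a^2+c) * Real.cos a * Real.sinh (Real.sqrt (a^2+c)) with hgdef
  have hgcont : ContinuousOn g (Icc (π/2) π) := by
    apply Continuous.continuousOn
    have hsq : Continuous fun a : ℝ => Real.sqrt (a^2+c) :=
      Real.continuous_sqrt.comp (by continuity)
    rw [hgdef]
    continuity
  have hg1 : 0 < g (π/2) := by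
    rw [hgdef]
    simp [Real.sin_pi_div_two, Real.cos_pi_div_two]
    positivity
  have hg2 : g π < 0 := by
    have hb : 0 < Real.sqrt (π^2+c) := Real.sqrt_pos.2 (by positivity)
    have hs : 0 < Real.sinh (Real.sqrt (π^2+c)) := Real.sinh_pos_iff.2 hb
    rw [hgdef]
    simp [Real.sin_pi, Real.cos_pi]
    positivity
  have hmem : (0:ℝ) ∈ Ioo (g π) (g (π/2)) := ⟨hg2, hg1⟩
  obtain ⟨a, haI, hga⟩ := intermediate_value_Ioo' (by linarith : π/2 ≤ π) hgcont hmem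
  obtain ⟨ha1, ha2⟩ := haI
  have ha0 : 0 < a := lt_trans (by positivity) ha1
  set b : ℝ := Real.sqrt (a^2+c) with hbdef
  have hb2 : b^2 = a^2 + c := Real.sq_sqrt (by positivity)
  have hb0 : 0 < b := Real.sqrt_pos.2 (by positivity)
  have hcosa : Real.cos a < 0 := Real.cos_neg_of_pi_div_two_lt_of_lt ha1 (by linarith)
  have hga' : a * Real.sin a * Real.cosh b + b * Real.cos a * Real.sinh b = 0 := by
    rw [hgdef] at hga; exact hga
  have hr1 : rr a b 1 = 0 := by unfold rr; simpa [mul_one] using hga'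
  -- the unnormalized eigenfunction
  set tφ : ℝ → ℝ := FF a b (-(Real.cos a)) 0 (Real.cosh b) 0 with htφdef
  have htφ_eval : ∀ y, tφ y = Real.cosh b * Real.cos (a*y) - Real.cos a * Real.cosh (b*y) := by
    intro y; rw [htφdef]; unfold FF; ring
  have htφ_even : ∀ y, tφ (-y) = tφ y := by
    intro y; rw [htφ_eval, htφ_eval]
    simp [mul_neg, Real.cos_neg, Real.cosh_neg]
  have htφ_eq : ∀ y, tφ y = Real.cosh b * Real.cosh (b*y) * (qq a b y - qq a b 1) := by
    intro y
    rw [htφ_eval]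
    unfold qq
    rw [mul_one]
    field_simp
  have htφ_pos : ∀ x ∈ Ioo (-1:ℝ) 1, 0 < tφ x := by
    intro x hx
    have hx1 : |x| < 1 := abs_lt.2 ⟨hx.1, hx.2⟩
    have hq : qq a b 1 < qq a b (|x|) :=
      qq_anti a b ha1 ha2 hr1 ⟨abs_nonneg x, hx1.le⟩
        (right_mem_Icc.2 zero_le_one) hx1
    have h1 : 0 < Real.cosh b * Real.cosh (b*|x|) * (qq a b (|x|) - qq a b 1) :=
      mul_pos (mul_pos (Real.cosh_pos b) (Real.cosh_pos _)) (sub_pos.2 hq)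
    have h2 : tφ (|x|) = tφ x := by
      rcases le_total 0 x with h | h
      · rw [abs_of_nonneg h]
      · rw [abs_of_nonpos h]; exact htφ_even x
    rw [← h2, htφ_eq]
    exact h1
  -- the maximum
  have htφcont : Continuous tφ := by rw [htφdef]; exact (contDiff_FF a b _ _ _ _).continuous
  obtain ⟨x₀, hx₀mem, hx₀max⟩ := isCompact_Icc.exists_isMaxOn
    (nonempty_Icc.2 (by norm_num : (-1:ℝ) ≤ 1)) htφcont.continuousOn
  set M : ℝ := tφ x₀ with hMdef
  have hM : 0 < M := by
    have h0 : tφ 0 ≤ M := hx₀max (by norm_num : (0:ℝ) ∈ Icc (-1:ℝ) 1)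
    have h1 : tφ 0 = Real.cosh b - Real.cos a := by
      rw [htφ_eval]; simp
    have := Real.cosh_pos b
    rw [h1] at h0; linarith
  have hMne : M ≠ 0 := hM.ne'
  -- the normalized eigenfunction
  set φ : ℝ → ℝ := FF a b (Real.cos a / M) 0 (-(Real.cosh b / M)) 0 with hφdef
  have hφeq : ∀ y, φ y = -(tφ y) / M := by
    intro y; rw [hφdef, htφ_eval]; unfold FF; field_simp; ring
  have hd1 : deriv φ = FF a b 0 (b*(Real.cos a / M)) 0 (a*(Real.cosh b / M)) := by
    rw [hφdef, deriv_FF]; funext y; unfold FF; ring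
  have e2 : iteratedDeriv 2 φ = deriv (deriv φ) := by
    rw [show (2:ℕ) = 1+1 from rfl, iteratedDeriv_succ, iteratedDeriv_one]
  have e4 : iteratedDeriv 4 φ = deriv (deriv (deriv (deriv φ))) := by
    rw [show (4:ℕ) = 3+1 from rfl, iteratedDeriv_succ, show (3:ℕ) = 2+1 from rfl,
      iteratedDeriv_succ, show (2:ℕ) = 1+1 from rfl, iteratedDeriv_succ, iteratedDeriv_one]
  have h2nd : iteratedDeriv 2 φ = FF a b (b^2*(Real.cos a / M)) 0 (a^2*(Real.cosh b / M)) 0 := by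
    rw [e2, hd1, deriv_FF]; funext y; unfold FF; ring
  have h4th : iteratedDeriv 4 φ
      = FF a b (b^4*(Real.cos a / M)) 0 (-(a^4*(Real.cosh b / M))) 0 := by
    rw [e4, hd1, deriv_FF, deriv_FF, deriv_FF]; funext y; unfold FF; ring
  have hbid : β*b^4 - τ*b^2 = β*a^4 + τ*a^2 := by
    have hb4 : b^4 = (a^2+c)^2 := by rw [show b^4 = (b^2)^2 from by ring, hb2]
    rw [hb4, hb2, hc]; field_simp; ring
  have htφ1 : tφ 1 = 0 := by rw [htφ_eval]; simp [mul_one]; ring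
  refine ⟨β*a^4 + τ*a^2, φ, ?_, ?_, ?_, ?_, ?_, ?_, ?_, ?_, ?_, ?_, ?_⟩
  · have h1 : 0 < β*a^4 := by positivity
    have h2 : 0 ≤ τ*a^2 := by positivity
    linarith
  · rw [hφdef]; exact contDiff_FF a b _ _ _ _
  · intro x _; rw [hφeq, hφeq, htφ_even]
  · rw [hφeq, show (-1:ℝ) = -(1:ℝ) from rfl, htφ_even 1, htφ1]; simp
  · rw [hφeq, htφ1]; simp
  · rw [hd1]; unfold FF
    simp only [mul_neg, mul_one, Real.sinh_neg, Real.sin_neg, zero_mul, zero_add, add_zero]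
    linear_combination (-(1/M)) * hga'
  · rw [hd1]; unfold FF
    simp only [mul_one, zero_mul, zero_add, add_zero]
    linear_combination (1/M) * hga'
  · intro x hx
    rw [hφeq]
    exact div_neg_of_neg_of_pos (neg_lt_zero.2 (htφ_pos x hx)) hM
  · intro x hx
    have h : tφ x ≤ M := hx₀max hx
    have h2 : tφ x / M ≤ 1 := (div_le_one hM).2 h
    rw [hφeq, neg_div]
    linarith
  · refine ⟨x₀, hx₀mem, ?_⟩
    rw [hφeq, ← hMdef, neg_div, div_self hMne]
  · intro x _
    rw [h4th, h2nd, hφdef]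
    unfold FF
    linear_combination (Real.cosh (b*x) * (Real.cos a / M)) * hbid
end

section
/- Let $\varepsilon>0$ and let $u:[-1,1]\to\mathbb{R}$ be continuous with $-1<u(x)\le 0$ for all $x\in[-1,1]$ and $u(\pm 1)=0$. Set $\Omega(u):=\{(x,z)\in\mathbb{R}^2:\,-1<x<1,\,-1<z<u(x)\}$. Let $\psi:\overline{\Omega(u)}\to\mathbb{R}$ be continuous on $\overline{\Omega(u)}$, twice continuously differentiable in $\Omega(u)$, satisfy $\varepsilon^2\,\partial_x^2\psi(x,z)+\partial_z^2\psi(x,z)=0$ for all $(x,z)\in\Omega(u)$, and $\psi(x,z)=\frac{1+z}{1+u(x)}$ for all $(x,z)\in\overline{\Omega(u)}\setminus\Omega(u)$. Then $1+z\;\le\;\psi(x,z)\;\le\;1$ for all $(x,z)\in\Omega(u)$. -/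
/-!
Weak maximum principle for `L = ε² ∂ₓ² + ∂_z²`: at an interior maximum both one-variable slices
have nonpositive second derivative, so `L f ≤ 0` there. Hence if `L f ≥ 0`, the strict
subsolution `f + η z²` attains its maximum over the compact set `closure Ω` on the boundary,
and `η → 0` gives `sup_Ω f ≤ sup_∂Ω f`. Since `-1 < u ≤ 0`, the boundary data `(1+z)/(1+u(x))`
lies between `1 + z` and `1`, both solutions of `L = 0`, and comparison gives the bounds.
-/

/-- The open region `Ω(u)` between the ground plate `z = -1` and the graph of `u`. -/
def OmegaRegion (u : ℝ → ℝ) : Set (ℝ × ℝ) :=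
  {p : ℝ × ℝ | p.1 ∈ Set.Ioo (-1:ℝ) 1 ∧ p.2 ∈ Set.Ioo (-1:ℝ) (u p.1)}

open Set Filter Topology

theorem IsLocalMax.deriv_deriv_nonpos {f : ℝ → ℝ} {a : ℝ} (h : IsLocalMax f a)
    (hc : ContinuousAt f a) : deriv (deriv f) a ≤ 0 := by
  by_contra! hpos
  have hmin := isLocalMin_of_deriv_deriv_pos hpos h.deriv_eq_zero hc
  have hconst : f =ᶠ[𝓝 a] fun _ => f a :=
    (h.and hmin).mono fun x hx => le_antisymm hx.1 hx.2
  rw [hconst.deriv.deriv_eq] at hpos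
  simp at hpos

noncomputable def rescaledLaplacian (ε : ℝ) (f : ℝ × ℝ → ℝ) (p : ℝ × ℝ) : ℝ :=
  ε ^ 2 * iteratedDeriv 2 (fun x => f (x, p.2)) p.1 + iteratedDeriv 2 (fun z => f (p.1, z)) p.2

section RescaledLaplacian

variable {ε : ℝ} {f g : ℝ × ℝ → ℝ} {p : ℝ × ℝ}

theorem ContDiffAt.curry_left {n : WithTop ℕ∞} (hf : ContDiffAt ℝ n f p) :
    ContDiffAt ℝ n (fun x => f (x, p.2)) p.1 :=
  hf.comp p.1 (contDiffAt_id.prodMk contDiffAt_const)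

theorem ContDiffAt.curry_right {n : WithTop ℕ∞} (hf : ContDiffAt ℝ n f p) :
    ContDiffAt ℝ n (fun z => f (p.1, z)) p.2 :=
  hf.comp p.2 (contDiffAt_const.prodMk contDiffAt_id)

theorem rescaledLaplacian_add (hf : ContDiffAt ℝ 2 f p) (hg : ContDiffAt ℝ 2 g p) :
    rescaledLaplacian ε (f + g) p = rescaledLaplacian ε f p + rescaledLaplacian ε g p := by
  simp only [rescaledLaplacian, Pi.add_apply,
    iteratedDeriv_fun_add hf.curry_left hg.curry_left,
    iteratedDeriv_fun_add hf.curry_right hg.curry_right]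
  ring

theorem rescaledLaplacian_sub (hf : ContDiffAt ℝ 2 f p) (hg : ContDiffAt ℝ 2 g p) :
    rescaledLaplacian ε (f - g) p = rescaledLaplacian ε f p - rescaledLaplacian ε g p := by
  simp only [rescaledLaplacian, Pi.sub_apply,
    iteratedDeriv_fun_sub hf.curry_left hg.curry_left,
    iteratedDeriv_fun_sub hf.curry_right hg.curry_right]
  ring

theorem rescaledLaplacian_quadratic_snd (a b c : ℝ) :
    rescaledLaplacian ε (fun q => a + b * q.2 + c * q.2 ^ 2) p = 2 * c := by
  have hd : deriv (fun z : ℝ => a + b * z + c * z ^ 2) = fun z => b + c * (2 * z) := by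
    ext z
    simpa using (((hasDerivAt_id z).const_mul b).const_add a).fun_add
      ((hasDerivAt_pow 2 z).const_mul c) |>.deriv
  simp [rescaledLaplacian, iteratedDeriv_succ, hd, mul_comm]

theorem IsLocalMax.rescaledLaplacian_nonpos (h : IsLocalMax f p) (hc : ContinuousAt f p) :
    rescaledLaplacian ε f p ≤ 0 := by
  have hx : deriv (deriv fun x => f (x, p.2)) p.1 ≤ 0 :=
    (IsLocalMax.comp_continuous (g := fun x => (x, p.2)) h (by fun_prop)).deriv_deriv_nonpos
      (ContinuousAt.comp (g := f) hc (by fun_prop))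
  have hz : deriv (deriv fun z => f (p.1, z)) p.2 ≤ 0 :=
    (IsLocalMax.comp_continuous (g := fun z => (p.1, z)) h (by fun_prop)).deriv_deriv_nonpos
      (ContinuousAt.comp (g := f) hc (by fun_prop))
  simp only [rescaledLaplacian, iteratedDeriv_succ, iteratedDeriv_zero]
  nlinarith [sq_nonneg ε]

variable {U : Set (ℝ × ℝ)}

theorem exists_mem_closure_diff_isMaxOn_of_rescaledLaplacian_pos (hU : IsOpen U)
    (hUb : Bornology.IsBounded U) (hne : U.Nonempty) (hfc : ContinuousOn f (closure U))
    (hL : ∀ p ∈ U, 0 < rescaledLaplacian ε f p) :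
    ∃ q ∈ closure U \ U, IsMaxOn f (closure U) q := by
  obtain ⟨q, hq, hmax⟩ := hUb.isCompact_closure.exists_isMaxOn hne.closure hfc
  refine ⟨q, ⟨hq, fun hqU => ?_⟩, hmax⟩
  have hnhds : closure U ∈ 𝓝 q := mem_of_superset (hU.mem_nhds hqU) subset_closure
  exact (hL q hqU).not_ge ((hmax.isLocalMax hnhds).rescaledLaplacian_nonpos
    (hfc.continuousAt hnhds))

theorem nonpos_of_rescaledLaplacian_nonneg (hU : IsOpen U) (hUb : Bornology.IsBounded U)
    (hfc : ContinuousOn f (closure U)) (hf : ContDiffOn ℝ 2 f U)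
    (hL : ∀ p ∈ U, 0 ≤ rescaledLaplacian ε f p) (hbd : ∀ p ∈ closure U \ U, f p ≤ 0) :
    ∀ p ∈ U, f p ≤ 0 := by
  intro p hp
  obtain ⟨C, hC⟩ := hUb.isCompact_closure.bddAbove_image
    (f := fun q : ℝ × ℝ => q.2 ^ 2) (by fun_prop)
  have hC' : ∀ q ∈ closure U, q.2 ^ 2 ≤ C := fun q hq => hC (mem_image_of_mem _ hq)
  have hperturbed : ∀ η > 0, f p ≤ η * C := by
    intro η hη
    have hL' : ∀ q ∈ U, 0 < rescaledLaplacian ε (f + fun q => η * q.2 ^ 2) q := fun q hq => by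
      have hquad := rescaledLaplacian_quadratic_snd (ε := ε) (p := q) 0 0 η
      simp only [zero_add, zero_mul] at hquad
      rw [rescaledLaplacian_add (hf.contDiffAt (hU.mem_nhds hq)) (by fun_prop), hquad]
      linarith [hL q hq]
    obtain ⟨q, hq, hmax⟩ := exists_mem_closure_diff_isMaxOn_of_rescaledLaplacian_pos hU hUb
      ⟨p, hp⟩ (hfc.add (by fun_prop)) hL'
    have hpq : f p + η * p.2 ^ 2 ≤ f q + η * q.2 ^ 2 := hmax (subset_closure hp)
    nlinarith [hbd q hq, mul_le_mul_of_nonneg_left (hC' q hq.1) hη.le,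
      mul_nonneg hη.le (sq_nonneg p.2)]
  have hC0 : 0 ≤ C := (sq_nonneg p.2).trans (hC' p (subset_closure hp))
  by_contra! hpos
  have := hperturbed (f p / (C + 1)) (by positivity)
  rw [div_mul_eq_mul_div, le_div_iff₀ (by positivity)] at this
  nlinarith

theorem le_of_rescaledLaplacian_le {v w : ℝ × ℝ → ℝ} (hU : IsOpen U)
    (hUb : Bornology.IsBounded U) (hvc : ContinuousOn v (closure U))
    (hwc : ContinuousOn w (closure U)) (hv : ContDiffOn ℝ 2 v U) (hw : ContDiffOn ℝ 2 w U)
    (hL : ∀ p ∈ U, rescaledLaplacian ε w p ≤ rescaledLaplacian ε v p)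
    (hbd : ∀ p ∈ closure U \ U, v p ≤ w p) : ∀ p ∈ U, v p ≤ w p := by
  intro p hp
  refine sub_nonpos.1 (nonpos_of_rescaledLaplacian_nonneg (ε := ε) hU hUb (hvc.sub hwc)
    (hv.sub hw) (fun q hq => ?_) (fun q hq => sub_nonpos.2 (hbd q hq)) p hp)
  rw [rescaledLaplacian_sub (hv.contDiffAt (hU.mem_nhds hq)) (hw.contDiffAt (hU.mem_nhds hq))]
  linarith [hL q hq]

end RescaledLaplacian

section OmegaRegion

variable {u : ℝ → ℝ}

theorem isOpen_omegaRegion (hu : ContinuousOn u (Icc (-1) 1)) : IsOpen (OmegaRegion u) := by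
  have hcont : ContinuousOn (fun p : ℝ × ℝ => u p.1 - p.2) (Ioo (-1) 1 ×ˢ Ioi (-1)) :=
    ((hu.mono Ioo_subset_Icc_self).comp continuousOn_fst fun _ hp => hp.1).sub continuousOn_snd
  have hopen := hcont.isOpen_inter_preimage (isOpen_Ioo.prod isOpen_Ioi) (isOpen_Ioi (a := 0))
  convert hopen using 1
  ext p
  simp only [OmegaRegion, mem_Ioo, mem_ofPred_eq, mem_inter_iff, mem_prod, mem_Ioi, mem_preimage,
    sub_pos]
  tauto

theorem closure_omegaRegion_subset (hu : ContinuousOn u (Icc (-1) 1)) :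
    closure (OmegaRegion u) ⊆ {p | p.1 ∈ Icc (-1) 1 ∧ p.2 ∈ Icc (-1) (u p.1)} := by
  have hclosed := (isClosed_Icc.prod (isClosed_Ici (a := -1))).isClosed_le continuousOn_snd
    (hu.comp continuousOn_fst fun _ hp => hp.1)
  refine closure_minimal (fun p hp => ?_) hclosed |>.trans fun p hp => ?_
  · exact ⟨⟨Ioo_subset_Icc_self hp.1, hp.2.1.le⟩, hp.2.2.le⟩
  · exact ⟨hp.1.1, hp.1.2, hp.2⟩

theorem isBounded_omegaRegion (hu : ContinuousOn u (Icc (-1) 1)) :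
    Bornology.IsBounded (OmegaRegion u) := by
  obtain ⟨M, hM⟩ := isCompact_Icc.bddAbove_image hu
  refine (Metric.isBounded_Icc (-1, -1) (1, M)).subset fun p hp => ?_
  have hpM : u p.1 ≤ M := hM (mem_image_of_mem u (Ioo_subset_Icc_self hp.1))
  exact ⟨⟨hp.1.1.le, hp.2.1.le⟩, ⟨hp.1.2.le, hp.2.2.le.trans hpM⟩⟩

end OmegaRegion

theorem stmt_7_general (ε : ℝ) (u : ℝ → ℝ) (ψ : ℝ → ℝ → ℝ)
    (huc : ContinuousOn u (Set.Icc (-1) 1))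
    (hu : ∀ x ∈ Set.Icc (-1:ℝ) 1, -1 < u x ∧ u x ≤ 0)
    (hψc : ContinuousOn (fun p : ℝ × ℝ => ψ p.1 p.2) (closure (OmegaRegion u)))
    (hψ2 : ContDiffOn ℝ 2 (fun p : ℝ × ℝ => ψ p.1 p.2) (OmegaRegion u))
    (hpde : ∀ p ∈ OmegaRegion u,
      ε ^ 2 * iteratedDeriv 2 (fun x => ψ x p.2) p.1 + iteratedDeriv 2 (ψ p.1) p.2 = 0)
    (hbc : ∀ p ∈ closure (OmegaRegion u) \ OmegaRegion u,
      ψ p.1 p.2 = (1 + p.2) / (1 + u p.1)) :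
    ∀ p ∈ OmegaRegion u, 1 + p.2 ≤ ψ p.1 p.2 ∧ ψ p.1 p.2 ≤ 1 := by
  have hU := isOpen_omegaRegion huc
  have hUb := isBounded_omegaRegion huc
  have hLψ : ∀ p ∈ OmegaRegion u, rescaledLaplacian ε (fun p => ψ p.1 p.2) p = 0 := hpde
  have hL1 (p : ℝ × ℝ) : rescaledLaplacian ε (fun _ => 1) p = 0 := by
    simpa using rescaledLaplacian_quadratic_snd (ε := ε) (p := p) 1 0 0
  have hLz (p : ℝ × ℝ) : rescaledLaplacian ε (fun q => 1 + q.2) p = 0 := by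
    simpa using rescaledLaplacian_quadratic_snd (ε := ε) (p := p) 1 1 0
  have hbd : ∀ q ∈ closure (OmegaRegion u) \ OmegaRegion u,
      0 ≤ 1 + q.2 ∧ 0 < 1 + u q.1 ∧ 1 + u q.1 ≤ 1 ∧ 1 + q.2 ≤ 1 + u q.1 := by
    intro q hq
    obtain ⟨hx, hz⟩ := closure_omegaRegion_subset huc hq.1
    have := hu q.1 hx
    exact ⟨by linarith [hz.1], by linarith, by linarith, by linarith [hz.2]⟩
  have hlower := le_of_rescaledLaplacian_le (v := fun q => 1 + q.2) hU hUb (by fun_prop) hψc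
    (by fun_prop) hψ2 (fun q hq => by rw [hLψ q hq, hLz]) fun q hq => by
      obtain ⟨hz, hu0, hu1, -⟩ := hbd q hq
      simpa [hbc q hq] using le_div_self hz hu0 hu1
  have hupper := le_of_rescaledLaplacian_le (w := fun _ => 1) hU hUb hψc (by fun_prop)
    hψ2 (by fun_prop) (fun q hq => by rw [hLψ q hq, hL1]) fun q hq => by
      obtain ⟨-, hu0, -, hzu⟩ := hbd q hq
      simpa [hbc q hq] using div_le_one_of_le₀ hzu hu0.le
  exact fun p hp => ⟨hlower p hp, hupper p hp⟩

/-- Comparison bounds (2.5) of Proposition 2.3 in classical form: a solution of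
`ε²∂ₓ²ψ + ∂_z²ψ = 0` in `Ω(u)` with boundary values `(1+z)/(1+u(x))` satisfies
`1 + z ≤ ψ(x,z) ≤ 1` in `Ω(u)`. -/
theorem stmt_7 (ε : ℝ) (hε : 0 < ε) (u : ℝ → ℝ) (ψ : ℝ → ℝ → ℝ)
    (huc : ContinuousOn u (Set.Icc (-1) 1))
    (hu : ∀ x ∈ Set.Icc (-1:ℝ) 1, -1 < u x ∧ u x ≤ 0)
    (hub : u (-1) = 0 ∧ u 1 = 0)
    (hψc : ContinuousOn (fun p : ℝ × ℝ => ψ p.1 p.2) (closure (OmegaRegion u)))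
    (hψ2 : ContDiffOn ℝ 2 (fun p : ℝ × ℝ => ψ p.1 p.2) (OmegaRegion u))
    (hpde : ∀ p ∈ OmegaRegion u,
      ε ^ 2 * iteratedDeriv 2 (fun x => ψ x p.2) p.1 + iteratedDeriv 2 (ψ p.1) p.2 = 0)
    (hbc : ∀ p ∈ closure (OmegaRegion u) \ OmegaRegion u,
      ψ p.1 p.2 = (1 + p.2) / (1 + u p.1)) :
    ∀ p ∈ OmegaRegion u, 1 + p.2 ≤ ψ p.1 p.2 ∧ ψ p.1 p.2 ≤ 1 :=
  stmt_7_general ε u ψ huc hu hψc hψ2 hpde hbc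
end
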